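/- arXiv:2409.16873 — 5 statements merged into one kernel-verified Lean document; each statement's English description precedes it below -/
import Mathlib

section
/- For every real number α₂ with 0 < α₂ < 1/2 and every z ∈ (-1, 1/(2α₂) - 1), we have log(1 + z) ≤ z - α₂·z². -/
/-!
The function `g t = t - α t² - log (1 + t)` vanishes at `0` and has derivative
`t (1 - 2α(1 + t)) / (1 + t)`. Where `2α(1 + t) ≤ 1`, this has the sign of `t`, so `g` decreases
up to `0` and increases after it, whence `g z ≥ 0`.
-/

open Real Set

variable {α x z : ℝ}

theorem hasDerivAt_sub_mul_sq_sub_log_one_add (hx : 0 < 1 + x) :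
    HasDerivAt (fun t ↦ t - α * t ^ 2 - log (1 + t)) (x * (1 - 2 * α * (1 + x)) / (1 + x)) x := by
  have h := ((hasDerivAt_id' x).sub ((hasDerivAt_pow 2 x).const_mul α)).sub
    (((hasDerivAt_id' x).const_add 1).log hx.ne')
  refine h.congr_deriv ?_
  field_simp
  ring

/-- `1 - 2α(1 + x)` is affine in `x` and equals `1` at `x = -1`. -/
theorem one_sub_two_mul_one_add_nonneg (hx : -1 < x) (hxz : x ≤ z) (hαz : 2 * α * (1 + z) ≤ 1) :
    0 ≤ 1 - 2 * α * (1 + x) := by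
  have key : (1 + z) * (1 - 2 * α * (1 + x)) = (z - x) + (1 + x) * (1 - 2 * α * (1 + z)) := by
    ring
  have hsum : 0 ≤ (1 + z) * (1 - 2 * α * (1 + x)) := by
    rw [key]
    have := mul_nonneg (by linarith : (0 : ℝ) ≤ 1 + x) (by linarith : 0 ≤ 1 - 2 * α * (1 + z))
    linarith
  exact (mul_nonneg_iff_of_pos_left (by linarith)).1 hsum

theorem log_one_add_le_sub_mul_sq_of_nonneg (hz : 0 ≤ z) (hαz : 2 * α * (1 + z) ≤ 1) :
    log (1 + z) ≤ z - α * z ^ 2 := by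
  have hmono : MonotoneOn (fun t ↦ t - α * t ^ 2 - log (1 + t)) (Icc 0 z) := by
    refine monotoneOn_of_hasDerivWithinAt_nonneg (convex_Icc 0 z)
      (f' := fun x ↦ x * (1 - 2 * α * (1 + x)) / (1 + x)) (fun x hx ↦ ?_) (fun x hx ↦ ?_)
      (fun x hx ↦ ?_)
    · exact (hasDerivAt_sub_mul_sq_sub_log_one_add (by linarith [hx.1])).continuousAt
        |>.continuousWithinAt
    · rw [interior_Icc] at hx
      exact (hasDerivAt_sub_mul_sq_sub_log_one_add (by linarith [hx.1])).hasDerivWithinAt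
    · rw [interior_Icc] at hx
      have := one_sub_two_mul_one_add_nonneg (by linarith [hx.1]) hx.2.le hαz
      exact div_nonneg (mul_nonneg hx.1.le this) (by linarith [hx.1])
  simpa using hmono (left_mem_Icc.2 hz) (right_mem_Icc.2 hz) hz

theorem log_one_add_le_sub_mul_sq_of_nonpos (hz1 : -1 < z) (hz : z ≤ 0) (hα : 2 * α ≤ 1) :
    log (1 + z) ≤ z - α * z ^ 2 := by
  have hanti : AntitoneOn (fun t ↦ t - α * t ^ 2 - log (1 + t)) (Icc z 0) := by
    refine antitoneOn_of_hasDerivWithinAt_nonpos (convex_Icc z 0)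
      (f' := fun x ↦ x * (1 - 2 * α * (1 + x)) / (1 + x)) (fun x hx ↦ ?_) (fun x hx ↦ ?_)
      (fun x hx ↦ ?_)
    · exact (hasDerivAt_sub_mul_sq_sub_log_one_add (by linarith [hx.1])).continuousAt
        |>.continuousWithinAt
    · rw [interior_Icc] at hx
      exact (hasDerivAt_sub_mul_sq_sub_log_one_add (by linarith [hx.1])).hasDerivWithinAt
    · rw [interior_Icc] at hx
      have := one_sub_two_mul_one_add_nonneg (by linarith [hx.1]) hx.2.le (by simpa using hα)
      exact div_nonpos_of_nonpos_of_nonneg (mul_nonpos_of_nonpos_of_nonneg hx.2.le this)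
        (by linarith [hx.1])
  simpa using hanti (left_mem_Icc.2 hz) (right_mem_Icc.2 hz) hz

theorem log_one_add_le (α₂ z : ℝ) (hα0 : 0 < α₂) (hα : α₂ < 1/2) (hz1 : -1 < z) (hz2 : z < 1/(2*α₂) - 1) :
    Real.log (1 + z) ≤ z - α₂ * z^2 := by
  rcases le_total 0 z with hz | hz
  · have : (1 + z) * (2 * α₂) < 1 := (lt_div_iff₀ (by positivity)).1 (by linarith)
    exact log_one_add_le_sub_mul_sq_of_nonneg hz (by linarith)
  · exact log_one_add_le_sub_mul_sq_of_nonpos hz1 hz (by linarith)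
end

section
/- Let 0 ≤ m < a < M ≤ 1, k ≥ 0, and b, c > 1. Define ω(t) = -k·t - (b-1)·log t - (c-1)·log(1-t) for t ∈ (0,1). If ω′(a) > 0 (so also ω′(M) > 0 by convexity), then ∫_a^M e^{-ω(t)} dt ≥ (e^{-k·a} a^{b-1}(1-a)^{c-1} / ω′(M)) · (1 - exp(-(M-a)·ω′(a))). -/
/-!
Write `ω = tiltedBetaPotential k b c`, so that `e^{-ω(t)} = e^{kt} t^{b-1} (1-t)^{c-1}`.
Since `b, c ≥ 1`, `ω'` is increasing on `(0, 1)`, so `ω' ≤ ω'(M)` on `[a, M]` and the mean value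
theorem gives `ω(t) ≤ ω(a) + ω'(M) (t - a)`. Integrating `e^{-ω(a)} e^{-ω'(M)(t - a)}` over `[a, M]`
bounds the integral below by `e^{-ω(a)} (1 - e^{-(M-a) ω'(M)}) / ω'(M)`; the stated bound is weaker,
because `e^{-ka} ≤ e^{ka}` and `ω'(a) ≤ ω'(M)`.
-/

open Real Set

noncomputable section

def tiltedBetaPotential (k b c t : ℝ) : ℝ :=
  -(k * t) - (b - 1) * log t - (c - 1) * log (1 - t)

def tiltedBetaPotentialDeriv (k b c t : ℝ) : ℝ :=
  -k - (b - 1) / t + (c - 1) / (1 - t)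

end

theorem hasDerivAt_tiltedBetaPotential (k b c : ℝ) {t : ℝ} (ht₀ : 0 < t) (ht₁ : t < 1) :
    HasDerivAt (tiltedBetaPotential k b c) (tiltedBetaPotentialDeriv k b c t) t := by
  have hlog₁ : HasDerivAt (fun s => log (1 - s)) (-1 / (1 - t)) t := by
    simpa using ((hasDerivAt_id t).const_sub 1).log (sub_ne_zero.2 ht₁.ne')
  refine ((((hasDerivAt_id t).const_mul k).neg.sub
    ((hasDerivAt_log ht₀.ne').const_mul (b - 1))).sub (hlog₁.const_mul (c - 1))).congr_deriv ?_
  simp only [tiltedBetaPotentialDeriv]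
  ring

theorem tiltedBetaPotentialDeriv_le (k : ℝ) {b c s t : ℝ} (hb : 1 ≤ b) (hc : 1 ≤ c)
    (hs : 0 < s) (hst : s ≤ t) (ht : t < 1) :
    tiltedBetaPotentialDeriv k b c s ≤ tiltedBetaPotentialDeriv k b c t := by
  have hlog : (b - 1) / t ≤ (b - 1) / s := by gcongr
  have hlog₁ : (c - 1) / (1 - s) ≤ (c - 1) / (1 - t) := by gcongr
  simp only [tiltedBetaPotentialDeriv]
  linarith

theorem exp_neg_tiltedBetaPotential (k b c : ℝ) {t : ℝ} (ht₀ : 0 < t) (ht₁ : t < 1) :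
    exp (-tiltedBetaPotential k b c t) = exp (k * t) * t ^ (b - 1) * (1 - t) ^ (c - 1) := by
  rw [rpow_def_of_pos ht₀, rpow_def_of_pos (by linarith), ← exp_add, ← exp_add,
    tiltedBetaPotential]
  ring_nf

theorem integral_exp_neg_mul_sub (a M : ℝ) {D : ℝ} (hD : D ≠ 0) :
    ∫ t in a..M, exp (-(D * (t - a))) = (1 - exp (-(D * (M - a)))) / D := by
  have hanti : ∀ t, HasDerivAt (fun s => -exp (-(D * (s - a))) / D) (exp (-(D * (t - a)))) t := by
    intro t
    refine ((((hasDerivAt_id t).sub_const a).const_mul D).neg.exp.neg.div_const D).congr_deriv ?_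
    field_simp
    rfl
  rw [intervalIntegral.integral_eq_sub_of_hasDerivAt (fun t _ => hanti t)
    ((by fun_prop : Continuous fun t => exp (-(D * (t - a)))).intervalIntegrable _ _)]
  simp only [sub_self, mul_zero, neg_zero, exp_zero]
  ring

theorem integral_exp_neg_ge_of_deriv_le {f : ℝ → ℝ} {a M D : ℝ} (haM : a ≤ M) (hD : D ≠ 0)
    (hf : ContinuousOn f (Icc a M)) (hf' : DifferentiableOn ℝ f (Ioo a M))
    (hf'D : ∀ t ∈ Ioo a M, deriv f t ≤ D) :
    exp (-f a) * ((1 - exp (-(D * (M - a)))) / D) ≤ ∫ t in a..M, exp (-f t) := by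
  have hpoint : ∀ t ∈ Icc a M, exp (-f a) * exp (-(D * (t - a))) ≤ exp (-f t) := by
    intro t ht
    have := (convex_Icc a M).image_sub_le_mul_sub_of_deriv_le hf (by rwa [interior_Icc])
      (by rwa [interior_Icc]) a (left_mem_Icc.2 haM) t ht ht.1
    rw [← exp_add, exp_le_exp]
    linarith
  have hcont : ContinuousOn (fun t => exp (-f t)) (uIcc a M) := by
    rw [uIcc_of_le haM]
    exact hf.neg.rexp
  rw [← integral_exp_neg_mul_sub a M hD, ← intervalIntegral.integral_const_mul]
  exact intervalIntegral.integral_mono_on haM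
    ((by fun_prop : Continuous fun t => exp (-f a) * exp (-(D * (t - a)))).intervalIntegrable _ _)
    hcont.intervalIntegrable hpoint

theorem integral_exp_neg_tiltedBetaPotential_ge (k : ℝ) {a M b c : ℝ} (ha : 0 < a) (haM : a ≤ M)
    (hM : M < 1) (hb : 1 ≤ b) (hc : 1 ≤ c) (hD : tiltedBetaPotentialDeriv k b c M ≠ 0) :
    exp (-tiltedBetaPotential k b c a) * ((1 - exp (-(tiltedBetaPotentialDeriv k b c M * (M - a))))
      / tiltedBetaPotentialDeriv k b c M) ≤ ∫ t in a..M, exp (-tiltedBetaPotential k b c t) := by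
  have hderiv : ∀ t ∈ Icc a M,
      HasDerivAt (tiltedBetaPotential k b c) (tiltedBetaPotentialDeriv k b c t) t :=
    fun t ht => hasDerivAt_tiltedBetaPotential k b c (ha.trans_le ht.1) (ht.2.trans_lt hM)
  refine integral_exp_neg_ge_of_deriv_le haM hD
    (fun t ht => (hderiv t ht).continuousAt.continuousWithinAt)
    (fun t ht => (hderiv t (Ioo_subset_Icc_self ht)).differentiableAt.differentiableWithinAt)
    (fun t ht => ?_)
  rw [(hderiv t (Ioo_subset_Icc_self ht)).deriv]
  exact tiltedBetaPotentialDeriv_le k hb hc (ha.trans ht.1) ht.2.le hM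

open Real in
theorem int_exp_neg_omega_lower (m a M k b c : ℝ) (hm : 0 ≤ m) (hma : m < a) (haM : a < M)
    (hM : M < 1) (hk : 0 ≤ k) (hb : 1 < b) (hc : 1 < c)
    (hda : 0 < -k - (b - 1) / a + (c - 1) / (1 - a)) :
    ∫ t in a..M, exp (-(-(k * t) - (b - 1) * log t - (c - 1) * log (1 - t)))
      ≥ exp (-(k * a)) * a ^ (b - 1) * (1 - a) ^ (c - 1)
          / (-k - (b - 1) / M + (c - 1) / (1 - M))
        * (1 - exp (-((M - a) * (-k - (b - 1) / a + (c - 1) / (1 - a))))) := by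
  have ha : 0 < a := hm.trans_lt hma
  have hd : 0 < tiltedBetaPotentialDeriv k b c a := hda
  have hdD : tiltedBetaPotentialDeriv k b c a ≤ tiltedBetaPotentialDeriv k b c M :=
    tiltedBetaPotentialDeriv_le k hb.le hc.le ha haM.le hM
  have hD : 0 < tiltedBetaPotentialDeriv k b c M := hd.trans_le hdD
  have hC : exp (-(k * a)) * a ^ (b - 1) * (1 - a) ^ (c - 1)
      ≤ exp (-tiltedBetaPotential k b c a) := by
    rw [exp_neg_tiltedBetaPotential k b c ha (haM.trans hM)]
    gcongr ?_ * _ * _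
    · exact rpow_nonneg (by linarith) _
    · exact exp_le_exp.2 (by nlinarith)
  have hexp : exp (-(tiltedBetaPotentialDeriv k b c M * (M - a)))
      ≤ exp (-((M - a) * tiltedBetaPotentialDeriv k b c a)) :=
    exp_le_exp.2 (by nlinarith [mul_le_mul_of_nonneg_left hdD (sub_nonneg.2 haM.le)])
  have hexp_le_one : exp (-((M - a) * tiltedBetaPotentialDeriv k b c a)) ≤ 1 :=
    exp_le_one_iff.2 (neg_nonpos.2 (by nlinarith))
  calc exp (-(k * a)) * a ^ (b - 1) * (1 - a) ^ (c - 1) / tiltedBetaPotentialDeriv k b c M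
        * (1 - exp (-((M - a) * tiltedBetaPotentialDeriv k b c a)))
      ≤ exp (-tiltedBetaPotential k b c a) * ((1 - exp (-(tiltedBetaPotentialDeriv k b c M
          * (M - a)))) / tiltedBetaPotentialDeriv k b c M) := by
        rw [div_mul_eq_mul_div, mul_div_assoc]
        gcongr
    _ ≤ _ := integral_exp_neg_tiltedBetaPotential_ge k ha haM.le hM hb.le hc.le hD.ne'
end

section
/- Let 0 < m < a < 1, k ≥ 0, b, c > 1 and ω(t) = -k·t - (b-1)·log t - (c-1)·log(1-t). If ω′(a) < 0, then ∫_m^a e^{-ω(t)} dt ≥ (e^{-k·a} a^{b-1}(1-a)^{c-1} / (-ω′(m))) · (1 - exp((a-m)·ω′(a))). -/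
/-!
Since `ω'` is increasing on `(0, 1)`, on `[m, a]` the slope of `ω` is at least `ω'(m) < 0`, so
`ω(a) - ω(t) ≥ ω'(m) (a - t)` and `e^{-ω(t)} ≥ e^{-ω(a)} e^{ω'(m)(a - t)}`. Integrating the
exponential gives `e^{-ω(a)} (1 - e^{(a - m) ω'(m)}) / (-ω'(m))`, and the claimed bound is weaker
because `e^{-ka} ≤ e^{ka}` and `ω'(m) ≤ ω'(a)`.
-/

open Real Set

noncomputable def omegaFn (k b c t : ℝ) : ℝ := -(k * t) - (b - 1) * log t - (c - 1) * log (1 - t)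

noncomputable def omegaFnDeriv (k b c t : ℝ) : ℝ := -k - (b - 1) / t + (c - 1) / (1 - t)

theorem hasDerivAt_omegaFn (k b c : ℝ) {t : ℝ} (ht₀ : 0 < t) (ht₁ : t < 1) :
    HasDerivAt (omegaFn k b c) (omegaFnDeriv k b c t) t := by
  have hlog : HasDerivAt (fun t => log (1 - t)) ((1 - t)⁻¹ * -1) t :=
    (hasDerivAt_log (by linarith)).comp t ((hasDerivAt_id' t).const_sub 1)
  refine ((((hasDerivAt_id' t).const_mul k).neg.sub
    ((hasDerivAt_log ht₀.ne').const_mul (b - 1))).sub (hlog.const_mul (c - 1))).congr_deriv ?_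
  simp only [omegaFnDeriv, div_eq_mul_inv]
  ring

theorem omegaFnDeriv_le_omegaFnDeriv (k : ℝ) {b c s t : ℝ} (hb : 1 ≤ b) (hc : 1 ≤ c)
    (hs : 0 < s) (hst : s ≤ t) (ht : t < 1) : omegaFnDeriv k b c s ≤ omegaFnDeriv k b c t := by
  have h₁ : (b - 1) / t ≤ (b - 1) / s := by gcongr
  have h₂ : (c - 1) / (1 - s) ≤ (c - 1) / (1 - t) := by gcongr
  simp only [omegaFnDeriv]
  linarith

theorem exp_neg_omegaFn (k b c : ℝ) {t : ℝ} (ht₀ : 0 < t) (ht₁ : t < 1) :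
    exp (-omegaFn k b c t) = exp (k * t) * t ^ (b - 1) * (1 - t) ^ (c - 1) := by
  rw [rpow_def_of_pos ht₀, rpow_def_of_pos (by linarith), ← exp_add, ← exp_add, omegaFn]
  ring_nf

theorem integral_exp_mul_sub {L : ℝ} (hL : L ≠ 0) (m a : ℝ) :
    ∫ t in m..a, exp (L * (a - t)) = (1 - exp (L * (a - m))) / -L := by
  have hderiv (t : ℝ) : HasDerivAt (fun t => exp (L * (a - t)) / -L) (exp (L * (a - t))) t := by
    refine (((((hasDerivAt_id' t).const_sub a).const_mul L).exp).div_const (-L)).congr_deriv ?_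
    field_simp
  rw [intervalIntegral.integral_eq_sub_of_hasDerivAt (fun t _ => hderiv t)
    ((by fun_prop : Continuous _).intervalIntegrable _ _)]
  simp only [sub_self, mul_zero, exp_zero]
  ring

theorem integral_exp_neg_ge_of_le_deriv {f f' : ℝ → ℝ} {m a L : ℝ} (hma : m ≤ a) (hL : L ≠ 0)
    (hf : ContinuousOn f (Icc m a)) (hf' : ∀ t ∈ Ioo m a, HasDerivAt f (f' t) t)
    (hLf' : ∀ t ∈ Ioo m a, L ≤ f' t) :
    exp (-f a) * ((1 - exp (L * (a - m))) / -L) ≤ ∫ t in m..a, exp (-f t) := by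
  have hslope : ∀ t ∈ Icc m a, L * (a - t) ≤ f a - f t := by
    refine fun t ht => (convex_Icc m a).mul_sub_le_image_sub_of_le_deriv hf ?_ ?_ t ht a
      (right_mem_Icc.2 hma) ht.2
    · rw [interior_Icc]
      exact fun t ht => (hf' t ht).differentiableAt.differentiableWithinAt
    · rw [interior_Icc]
      exact fun t ht => (hf' t ht).deriv ▸ hLf' t ht
  rw [← integral_exp_mul_sub hL, ← intervalIntegral.integral_const_mul]
  refine intervalIntegral.integral_mono_on hma ((by fun_prop : Continuous _).intervalIntegrable _ _)
    ((hf.neg.rexp).intervalIntegrable_of_Icc hma) fun t ht => ?_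
  rw [← exp_add]
  exact exp_le_exp.2 (by linarith [hslope t ht])

open Real in
theorem int_exp_neg_omega_lower' (m a k b c : ℝ) (hm : 0 < m) (hma : m < a) (ha : a < 1)
    (hk : 0 ≤ k) (hb : 1 < b) (hc : 1 < c)
    (hda : -k - (b - 1) / a + (c - 1) / (1 - a) < 0) :
    ∫ t in m..a, exp (-(-(k * t) - (b - 1) * log t - (c - 1) * log (1 - t)))
      ≥ exp (-(k * a)) * a ^ (b - 1) * (1 - a) ^ (c - 1)
          / (-(-k - (b - 1) / m + (c - 1) / (1 - m)))
        * (1 - exp ((a - m) * (-k - (b - 1) / a + (c - 1) / (1 - a)))) := by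
  change omegaFnDeriv k b c a < 0 at hda
  have ha₀ : 0 < a := hm.trans hma
  change ∫ t in m..a, exp (-omegaFn k b c t)
    ≥ _ / -omegaFnDeriv k b c m * (1 - exp ((a - m) * omegaFnDeriv k b c a))
  have hderiv : ∀ t ∈ Icc m a, HasDerivAt (omegaFn k b c) (omegaFnDeriv k b c t) t :=
    fun t ht => hasDerivAt_omegaFn k b c (hm.trans_le ht.1) (ht.2.trans_lt ha)
  have hmono : ∀ t ∈ Icc m a, omegaFnDeriv k b c m ≤ omegaFnDeriv k b c t :=
    fun t ht => omegaFnDeriv_le_omegaFnDeriv k hb.le hc.le hm ht.1 (ht.2.trans_lt ha)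
  have hL : omegaFnDeriv k b c m ≤ omegaFnDeriv k b c a := hmono a (right_mem_Icc.2 hma.le)
  have hbound := integral_exp_neg_ge_of_le_deriv hma.le (hL.trans_lt hda).ne
    (fun t ht => (hderiv t ht).continuousAt.continuousWithinAt)
    (fun t ht => hderiv t (Ioo_subset_Icc_self ht)) (fun t ht => hmono t (Ioo_subset_Icc_self ht))
  rw [exp_neg_omegaFn k b c ha₀ ha] at hbound
  refine le_trans ?_ hbound
  have hexp : exp (-(k * a)) ≤ exp (k * a) := exp_le_exp.2 (by nlinarith)
  have hexp_le_one : exp ((a - m) * omegaFnDeriv k b c a) ≤ 1 :=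
    exp_le_one_iff.2 (mul_nonpos_of_nonneg_of_nonpos (by linarith) hda.le)
  rw [mul_div_assoc', div_mul_eq_mul_div, mul_comm (omegaFnDeriv k b c m)]
  gcongr
  linarith
end

section
/- Fix x > 1 and 0 < δ < (x-1)/2, let p₁, p₂, n be positive integers, p = p₁ + p₂, and for real numbers x₁ ≤ x₂ ≤ ⋯ ≤ xₙ in [0,1] satisfying p₁(1-δ)/p < x₁ and x_{n-1} < p₁(1+δ)/p and xₙ > p₁x/p, setting x̄ᵢ = (p·xᵢ - p₁)/(p₁(x-1)) and α₁ = 1/2 + δ/(x-1), we have ∏_{i=1}^{n-1}(xₙ - xᵢ) ≥ (p₁(x-1)/p)^{n-1} · exp( -∑_{i=1}^{n-1} x̄ᵢ - α₁ ∑_{i=1}^{n-1} x̄ᵢ² ). -/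
/-!
Write `c = p₁(x - 1)/p` and `zᵢ = (p xᵢ - p₁)/(p₁(x - 1))`. Since `xₙ > p₁x/p`, each factor
satisfies `xₙ - xᵢ ≥ c (1 - zᵢ)`, and since `x₁ ≤ xᵢ ≤ xₙ₋₁` lie in the window `p₁(1 ± δ)/p`,
`|zᵢ| ≤ t := δ/(x - 1) ≤ 1/2`. It remains to bound `log (1 - z) ≥ -z - (1/2 + t) z²`.
For `z ≤ 0` this follows from `log (1 + w) ≥ 2w/(w + 2)`; for `z > 0` from `sinh y ≤ y` at
`y = log (1 - z) ≤ 0`, i.e. `log (1 - z) ≥ ((1 - z) - (1 - z)⁻¹)/2`, which is good enough exactly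
when `z ≤ 1 - 1/(1 + 2t)`.
-/

open Real Finset

namespace Real

theorem neg_sub_mul_sq_le_log_one_sub {α z : ℝ} (hα : 1 / 2 ≤ α)
    (hz : z ≤ 1 - (2 * α)⁻¹) :
    -z - α * z ^ 2 ≤ log (1 - z) := by
  rcases le_or_gt z 0 with hz₀ | hz₀
  · have hlog := le_log_one_add_of_nonneg (neg_nonneg.mpr hz₀)
    rw [← sub_eq_add_neg] at hlog
    refine le_trans ?_ hlog
    rw [le_div_iff₀ (by linarith)]
    nlinarith [sq_nonneg z, mul_nonneg (sq_nonneg z) (neg_nonneg.mpr hz₀)]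
  · have hα₀ : 0 < 2 * α := by linarith
    have hz₁ : 0 < 1 - z := by
      have := inv_pos.mpr hα₀
      linarith
    have hsinh := sinh_le_self_iff.mpr (log_nonpos hz₁.le (by linarith))
    rw [sinh_log hz₁] at hsinh
    refine le_trans ?_ hsinh
    have hinv : (1 - z)⁻¹ ≤ 2 * α := (inv_le_comm₀ hz₁ hα₀).mpr (by linarith)
    have hexpand : (1 - z)⁻¹ = 1 + z + z ^ 2 * (1 - z)⁻¹ := by field_simp; ring
    nlinarith [mul_le_mul_of_nonneg_left hinv (sq_nonneg z)]

theorem exp_neg_sub_mul_sq_le_one_sub_of_abs_le {t z : ℝ} (ht : t ≤ 1 / 2) (hz : |z| ≤ t) :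
    exp (-z - (1 / 2 + t) * z ^ 2) ≤ 1 - z := by
  obtain ⟨hzt₁, hzt₂⟩ := abs_le.mp hz
  have hrange : z ≤ 1 - (2 * (1 / 2 + t))⁻¹ := by
    have : (2 * (1 / 2 + t))⁻¹ ≤ 1 - t := by
      rw [inv_le_iff_one_le_mul₀' (by linarith)]
      nlinarith
    linarith
  have hz₁ : 0 < 1 - z := by linarith
  rw [← exp_log hz₁]
  exact exp_le_exp.mpr (neg_sub_mul_sq_le_log_one_sub (by linarith) hrange)

end Real

theorem Finset.pow_card_mul_exp_sum_le_prod {ι : Type*} {s : Finset ι} {c : ℝ} (hc : 0 ≤ c)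
    {f g : ι → ℝ} (h : ∀ i ∈ s, c * exp (g i) ≤ f i) :
    c ^ #s * exp (∑ i ∈ s, g i) ≤ ∏ i ∈ s, f i := by
  rw [exp_sum, ← prod_const, ← prod_mul_distrib]
  exact prod_le_prod (fun _ _ => by positivity) h

theorem interaction_factor_lower_bound {x δ p₁ p a b : ℝ} (hx : 1 < x) (hδ : δ < (x - 1) / 2)
    (hp₁ : 0 < p₁) (hp : 0 < p) (ha : |p * a - p₁| ≤ p₁ * δ) (hb : p₁ * x < p * b) :
    p₁ * (x - 1) / p * exp (-((p * a - p₁) / (p₁ * (x - 1)))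
        - (1 / 2 + δ / (x - 1)) * ((p * a - p₁) / (p₁ * (x - 1))) ^ 2) ≤ b - a := by
  set z := (p * a - p₁) / (p₁ * (x - 1))
  set t := δ / (x - 1)
  have hx₁ : 0 < x - 1 := by linarith
  have ht : t ≤ 1 / 2 := by rw [div_le_iff₀ hx₁]; linarith
  have hz : |z| ≤ t :=
    calc |z| = |p * a - p₁| / (p₁ * (x - 1)) := by rw [abs_div, abs_of_pos (mul_pos hp₁ hx₁)]
      _ ≤ p₁ * δ / (p₁ * (x - 1)) := by gcongr
      _ = t := mul_div_mul_left _ _ hp₁.ne'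
  calc _ ≤ p₁ * (x - 1) / p * (1 - z) := by
        gcongr
        exact exp_neg_sub_mul_sq_le_one_sub_of_abs_le ht hz
    _ = (p₁ * x - p * a) / p := by simp only [z]; field_simp; ring
    _ ≤ b - a := by rw [div_le_iff₀ hp]; linarith

open Real in
theorem interaction_lower_bound_general (x δ : ℝ) (hx : 1 < x) (hδ : δ < (x - 1) / 2)
    (n p₁ p₂ : ℕ) (hp₁ : 0 < p₁)
    (xs : ℕ → ℝ)
    (hmono : ∀ i, 1 ≤ i → i < n → xs i ≤ xs (i + 1))
    (h1 : (p₁ : ℝ) * (1 - δ) / (p₁ + p₂) < xs 1)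
    (h2 : xs (n - 1) < (p₁ : ℝ) * (1 + δ) / (p₁ + p₂))
    (h3 : (p₁ : ℝ) * x / (p₁ + p₂) < xs n) :
    ∏ i ∈ Finset.Icc 1 (n - 1), (xs n - xs i)
      ≥ ((p₁ : ℝ) * (x - 1) / (p₁ + p₂)) ^ (n - 1)
        * exp (-(∑ i ∈ Finset.Icc 1 (n - 1),
              ((p₁ + p₂ : ℝ) * xs i - p₁) / (p₁ * (x - 1)))
            - (1 / 2 + δ / (x - 1))
              * ∑ i ∈ Finset.Icc 1 (n - 1),
                  (((p₁ + p₂ : ℝ) * xs i - p₁) / (p₁ * (x - 1))) ^ 2) := by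
  set p : ℝ := p₁ + p₂
  set z : ℕ → ℝ := fun i => (p * xs i - p₁) / (p₁ * (x - 1))
  set α := 1 / 2 + δ / (x - 1)
  have hp₁' : (0 : ℝ) < p₁ := by exact_mod_cast hp₁
  have hp : 0 < p := by positivity
  have hxs : MonotoneOn xs (Set.Icc 1 n) := monotoneOn_of_le_succ Set.ordConnected_Icc
    fun i _ hi hsi => hmono i hi.1 (Order.succ_le_iff.mp hsi.2)
  have hwindow : ∀ i ∈ Icc 1 (n - 1), |p * xs i - p₁| ≤ p₁ * δ := by
    intro i hi
    rw [mem_Icc] at hi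
    have hlo := h1.trans_le (hxs ⟨le_rfl, by omega⟩ ⟨hi.1, by omega⟩ hi.1)
    have hhi := (hxs ⟨hi.1, by omega⟩ ⟨by omega, by omega⟩ hi.2).trans_lt h2
    rw [div_lt_iff₀ hp] at hlo
    rw [lt_div_iff₀ hp] at hhi
    exact abs_le.mpr ⟨by linarith, by linarith⟩
  have hfactor : ∀ i ∈ Icc 1 (n - 1), p₁ * (x - 1) / p * exp (-z i - α * z i ^ 2) ≤ xs n - xs i :=
    fun i hi => interaction_factor_lower_bound hx hδ hp₁' hp (hwindow i hi)
      ((div_lt_iff₀' hp).mp h3)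
  calc (p₁ * (x - 1) / p) ^ (n - 1)
        * exp (-(∑ i ∈ Icc 1 (n - 1), z i) - α * ∑ i ∈ Icc 1 (n - 1), z i ^ 2)
    _ = (p₁ * (x - 1) / p) ^ #(Icc 1 (n - 1))
        * exp (∑ i ∈ Icc 1 (n - 1), (-z i - α * z i ^ 2)) := by
      rw [Nat.card_Icc, Nat.add_sub_cancel, sum_sub_distrib, sum_neg_distrib, mul_sum]
    _ ≤ _ := pow_card_mul_exp_sum_le_prod (by positivity) hfactor

open Real in
theorem interaction_lower_bound (x δ : ℝ) (hx : 1 < x) (hδ0 : 0 < δ) (hδ : δ < (x - 1) / 2)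
    (n p₁ p₂ : ℕ) (hn : 2 ≤ n) (hp₁ : 0 < p₁) (hp₂ : 0 < p₂)
    (xs : ℕ → ℝ)
    (hmono : ∀ i, 1 ≤ i → i < n → xs i ≤ xs (i + 1))
    (hrange : ∀ i, 1 ≤ i → i ≤ n → xs i ∈ Set.Icc (0 : ℝ) 1)
    (h1 : (p₁ : ℝ) * (1 - δ) / (p₁ + p₂) < xs 1)
    (h2 : xs (n - 1) < (p₁ : ℝ) * (1 + δ) / (p₁ + p₂))
    (h3 : (p₁ : ℝ) * x / (p₁ + p₂) < xs n) :
    ∏ i ∈ Finset.Icc 1 (n - 1), (xs n - xs i)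
      ≥ ((p₁ : ℝ) * (x - 1) / (p₁ + p₂)) ^ (n - 1)
        * exp (-(∑ i ∈ Finset.Icc 1 (n - 1),
              ((p₁ + p₂ : ℝ) * xs i - p₁) / (p₁ * (x - 1)))
            - (1 / 2 + δ / (x - 1))
              * ∑ i ∈ Finset.Icc 1 (n - 1),
                  (((p₁ + p₂ : ℝ) * xs i - p₁) / (p₁ * (x - 1))) ^ 2) :=
  interaction_lower_bound_general x δ hx hδ n p₁ p₂ hp₁ xs hmono h1 h2 h3
end

section
/- Fix x > 1, positive integers n, p₁, p₂, set p = p₁+p₂. For real numbers 0 ≤ x₁ ≤ ⋯ ≤ xₙ ≤ 1 with xₙ > p₁x/p, we have ∏_{i=1}^{n-1}(xₙ - xᵢ) ≤ (p₁(x-1)/p)^{n-1} · exp( ((n-1)p/(p₁(x-1)))·(xₙ - p₁x/p) - ∑_{i=1}^{n-1} (p·xᵢ - p₁)/(p₁(x-1)) ). -/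
/-!
With `C = p₁(x - 1)/p`, each factor is `xₙ - xᵢ = C (1 + uᵢ)` where `uᵢ` is the difference of the
two normalized terms in the exponent; by monotonicity these factors are nonnegative, so
`1 + u ≤ exp u` bounds the product by `C^(n-1) exp (∑ uᵢ)`, and `∑ uᵢ` is the stated exponent.
-/

open Finset Real

theorem monotoneOn_Icc_of_le_add_one {α : Type*} [Preorder α] {f : ℕ → α} {m n : ℕ}
    (hf : ∀ i, m ≤ i → i < n → f i ≤ f (i + 1)) : MonotoneOn f (Set.Icc m n) :=
  monotoneOn_of_le_succ Set.ordConnected_Icc fun i _ hi hi' => by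
    simp only [Order.succ_eq_add_one, Set.mem_Icc] at hi hi' ⊢
    exact hf i hi.1 hi'.2

theorem prod_mul_one_add_le_pow_mul_exp_sum {ι : Type*} (s : Finset ι) {C : ℝ} (hC : 0 ≤ C)
    (u : ι → ℝ) (hu : ∀ i ∈ s, 0 ≤ 1 + u i) :
    ∏ i ∈ s, C * (1 + u i) ≤ C ^ #s * exp (∑ i ∈ s, u i) := by
  rw [prod_mul_distrib, prod_const, exp_sum]
  gcongr with i
  · exact hu
  · linarith [add_one_le_exp (u i)]

theorem sub_eq_mul_one_add_sub_div {q x P : ℝ} (hq : q ≠ 0) (hx : x ≠ 1) (hP : P ≠ 0) (y z : ℝ) :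
    y - z = q * (x - 1) / P * (1 + ((P * y - q * x) / (q * (x - 1)) - (P * z - q) / (q * (x - 1)))) := by
  have : x - 1 ≠ 0 := sub_ne_zero.2 hx
  field_simp
  ring

theorem interaction_upper_bound_general (x : ℝ) (hx : 1 < x) (n p₁ p₂ : ℕ) (hn : 1 ≤ n)
    (hp₁ : 0 < p₁) (xs : ℕ → ℝ)
    (hmono : ∀ i, 1 ≤ i → i < n → xs i ≤ xs (i + 1)) :
    ∏ i ∈ Finset.Icc 1 (n - 1), (xs n - xs i)
      ≤ ((p₁ : ℝ) * (x - 1) / (p₁ + p₂)) ^ (n - 1)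
        * exp ((n - 1 : ℝ) * (p₁ + p₂) / (p₁ * (x - 1))
              * (xs n - (p₁ : ℝ) * x / (p₁ + p₂))
            - ∑ i ∈ Finset.Icc 1 (n - 1),
                ((p₁ + p₂ : ℝ) * xs i - p₁) / (p₁ * (x - 1))) := by
  set P : ℝ := p₁ + p₂
  set C : ℝ := p₁ * (x - 1) / P
  have hP : 0 < P := by positivity
  have hC : 0 < C := by have := sub_pos.2 hx; positivity
  let u (i : ℕ) : ℝ := (P * xs n - p₁ * x) / (p₁ * (x - 1)) - (P * xs i - p₁) / (p₁ * (x - 1))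
  have hfactor (i : ℕ) : xs n - xs i = C * (1 + u i) :=
    sub_eq_mul_one_add_sub_div (by positivity) hx.ne' hP.ne' _ _
  have hu (i : ℕ) (hi : i ∈ Icc 1 (n - 1)) : 0 ≤ 1 + u i := by
    rw [mem_Icc] at hi
    refine nonneg_of_mul_nonneg_right ?_ hC
    rw [← hfactor, sub_nonneg]
    exact monotoneOn_Icc_of_le_add_one hmono ⟨hi.1, by omega⟩ ⟨hn, le_rfl⟩ (by omega)
  have hcard : #(Icc 1 (n - 1)) = n - 1 := by simp
  have hsum : ∑ i ∈ Icc 1 (n - 1), u i = (n - 1 : ℝ) * P / (p₁ * (x - 1)) * (xs n - p₁ * x / P)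
      - ∑ i ∈ Icc 1 (n - 1), (P * xs i - p₁) / (p₁ * (x - 1)) := by
    rw [sum_sub_distrib, sum_const, hcard, nsmul_eq_mul, Nat.cast_sub hn]
    congr 1
    field_simp
    push_cast
    ring
  calc ∏ i ∈ Icc 1 (n - 1), (xs n - xs i) = ∏ i ∈ Icc 1 (n - 1), C * (1 + u i) :=
        prod_congr rfl fun i _ => hfactor i
    _ ≤ C ^ (n - 1) * exp (∑ i ∈ Icc 1 (n - 1), u i) := by
        simpa only [hcard] using prod_mul_one_add_le_pow_mul_exp_sum _ hC.le u hu
    _ = _ := by rw [hsum]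

open Real in
theorem interaction_upper_bound (x : ℝ) (hx : 1 < x) (n p₁ p₂ : ℕ) (hn : 1 ≤ n)
    (hp₁ : 0 < p₁) (hp₂ : 0 < p₂) (xs : ℕ → ℝ)
    (hmono : ∀ i, 1 ≤ i → i < n → xs i ≤ xs (i + 1))
    (hrange : ∀ i, 1 ≤ i → i ≤ n → xs i ∈ Set.Icc (0 : ℝ) 1)
    (h3 : (p₁ : ℝ) * x / (p₁ + p₂) < xs n) :
    ∏ i ∈ Finset.Icc 1 (n - 1), (xs n - xs i)
      ≤ ((p₁ : ℝ) * (x - 1) / (p₁ + p₂)) ^ (n - 1)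
        * exp ((n - 1 : ℝ) * (p₁ + p₂) / (p₁ * (x - 1))
              * (xs n - (p₁ : ℝ) * x / (p₁ + p₂))
            - ∑ i ∈ Finset.Icc 1 (n - 1),
                ((p₁ + p₂ : ℝ) * xs i - p₁) / (p₁ * (x - 1))) :=
  interaction_upper_bound_general x hx n p₁ p₂ hn hp₁ xs hmono
end
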